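/- arXiv:2408.08046 — 2 statements merged into one kernel-verified Lean document; each statement's English description precedes it below -/
import Mathlib

section
/- Let (Ω, F, P) be a probability space, ζ, ζ' : Ω → ℝ^m random variables with the same law P∘ζ⁻¹ = P∘(ζ')⁻¹, and η : Ω → ℝ a random variable. Let (x, y) ↦ F_x(y) be a regular conditional cumulative distribution function of η given ζ, i.e.: (i) for every x ∈ ℝ^m, F_x(·) is a cumulative distribution function on ℝ; (ii) for every y ∈ ℝ and every Borel set Γ ⊆ ℝ^m, ∫_Γ F_x(y) (P∘ζ⁻¹)(dx) = P(η ≤ y, ζ ∈ Γ); (iii) (x, y) ↦ F_x(y) is Borel measurable. Define the left-inverse F*_x(u) := inf{ y ∈ ℝ : F_x(y) ≥ u } for u ∈ (0,1). Let ū : Ω → (0,1) be uniformly distributed on (0,1) and independent of ζ'. Then η' := F*_{ζ'}(ū) is a random variable satisfying P∘(ζ', η')⁻¹ = P∘(ζ, η)⁻¹. -/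
open MeasureTheory ProbabilityTheory

/-- Given a regular conditional CDF `F` of `η` knowing `ζ`, random variables
`ζ, ζ'` with the same law, and a uniform-`(0,1)` random variable `ū` independent of `ζ'`, the
random variable `η' := F*_{ζ'}(ū)` (with `F*` the left-inverse of the conditional CDF)
satisfies `P ∘ (ζ', η')⁻¹ = P ∘ (ζ, η)⁻¹`. -/
theorem stmt1
    {Ω : Type*} [MeasurableSpace Ω] (P : Measure Ω) [IsProbabilityMeasure P]
    (m : ℕ) (ζ ζ' : Ω → (Fin m → ℝ)) (η : Ω → ℝ)
    (hζ_meas : Measurable ζ) (hζ'_meas : Measurable ζ') (hη_meas : Measurable η)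
    (hlaw : P.map ζ = P.map ζ')
    (F : (Fin m → ℝ) → ℝ → ℝ)
    -- (i) for every x, F x is a cumulative distribution function
    (hF_mono : ∀ x, Monotone (F x))
    (hF_rc : ∀ x y, ContinuousWithinAt (F x) (Set.Ici y) y)
    (hF_bot : ∀ x, Filter.Tendsto (F x) Filter.atBot (nhds 0))
    (hF_top : ∀ x, Filter.Tendsto (F x) Filter.atTop (nhds 1))
    (hF_range : ∀ x y, F x y ∈ Set.Icc (0 : ℝ) 1)
    -- (ii) ∫_Γ F_x(y) (P∘ζ⁻¹)(dx) = P(η ≤ y, ζ ∈ Γ)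
    (hF_cond : ∀ (y : ℝ) (Γ : Set (Fin m → ℝ)), MeasurableSet Γ →
      ∫ x in Γ, F x y ∂(P.map ζ) = (P {ω | η ω ≤ y ∧ ζ ω ∈ Γ}).toReal)
    -- (iii) joint Borel measurability of (x, y) ↦ F_x(y)
    (hF_meas : Measurable fun p : (Fin m → ℝ) × ℝ => F p.1 p.2)
    -- ū uniform on (0,1) and independent of ζ'
    (u : Ω → ℝ) (hu_meas : Measurable u) (hu_mem : ∀ ω, u ω ∈ Set.Ioo (0 : ℝ) 1)
    (hu_law : P.map u = volume.restrict (Set.Ioo (0 : ℝ) 1))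
    (hu_indep : IndepFun u ζ' P) :
    Measurable (fun ω => sInf {y : ℝ | u ω ≤ F (ζ' ω) y}) ∧
      P.map (fun ω => (ζ' ω, sInf {y : ℝ | u ω ≤ F (ζ' ω) y}))
        = P.map (fun ω => (ζ ω, η ω)) := by
  -- the Galois property of the left-inverse of the CDF
  have key : ∀ (c : ℝ), c ∈ Set.Ioo (0 : ℝ) 1 → ∀ x y,
      sInf {y' : ℝ | c ≤ F x y'} ≤ y ↔ c ≤ F x y := by
    intro c hc x y
    have hne : {y' : ℝ | c ≤ F x y'}.Nonempty := by
      obtain ⟨y', hy'⟩ := ((hF_top x).eventually (eventually_ge_nhds hc.2)).exists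
      exact ⟨y', hy'⟩
    have hbdd : BddBelow {y' : ℝ | c ≤ F x y'} := by
      obtain ⟨b, hb⟩ := ((hF_bot x).eventually (eventually_lt_nhds hc.1)).exists
      refine ⟨b, fun z hz => ?_⟩
      by_contra h
      push_neg at h
      exact absurd (le_trans hz (hF_mono x h.le)) (not_le.2 hb)
    constructor
    · intro h
      have ht : Filter.Tendsto (F x) (nhdsWithin y (Set.Ioi y)) (nhds (F x y)) :=
        (hF_rc x y).mono Set.Ioi_subset_Ici_self
      refine ge_of_tendsto ht ?_
      refine Filter.eventually_of_mem self_mem_nhdsWithin (fun z hz => ?_)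
      obtain ⟨a, ha, haz⟩ := (csInf_lt_iff hbdd hne).mp (lt_of_le_of_lt h hz)
      exact le_trans ha (hF_mono x haz.le)
    · intro h
      exact csInf_le hbdd h
  -- measurability of η'
  have hη'_meas : Measurable (fun ω => sInf {y : ℝ | u ω ≤ F (ζ' ω) y}) := by
    apply measurable_of_Iic
    intro c
    have hset : (fun ω => sInf {y : ℝ | u ω ≤ F (ζ' ω) y}) ⁻¹' Set.Iic c
        = {ω | u ω ≤ F (ζ' ω) c} := by
      ext ω
      simpa using key (u ω) (hu_mem ω) (ζ' ω) c
    rw [hset]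
    exact measurableSet_le hu_meas (hF_meas.comp (hζ'_meas.prodMk measurable_const))
  refine ⟨hη'_meas, ?_⟩
  -- both sides are probability measures
  haveI h₁ : IsProbabilityMeasure (P.map (fun ω => (ζ' ω, sInf {y : ℝ | u ω ≤ F (ζ' ω) y}))) :=
    Measure.isProbabilityMeasure_map (hζ'_meas.prodMk hη'_meas).aemeasurable
  haveI h₂ : IsProbabilityMeasure (P.map (fun ω => (ζ ω, η ω))) :=
    Measure.isProbabilityMeasure_map (hζ_meas.prodMk hη_meas).aemeasurable
  -- generation of the product σ-algebra
  have hspan : IsCountablySpanning (Set.range (Set.Iic : ℝ → Set ℝ)) := by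
    refine ⟨fun n => Set.Iic (n : ℝ), fun n => ⟨n, rfl⟩, ?_⟩
    ext x
    simp only [Set.mem_iUnion, Set.mem_Iic, Set.mem_univ, iff_true]
    exact exists_nat_ge x
  have hD : MeasurableSpace.generateFrom (Set.range (Set.Iic : ℝ → Set ℝ))
      = (inferInstance : MeasurableSpace ℝ) :=
    (borel_eq_generateFrom_Iic ℝ).symm.trans (BorelSpace.measurable_eq (α := ℝ)).symm
  have hgen : (inferInstance : MeasurableSpace ((Fin m → ℝ) × ℝ))
      = MeasurableSpace.generateFrom
        (Set.image2 (· ×ˢ ·) {s : Set (Fin m → ℝ) | MeasurableSet s}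
          (Set.range (Set.Iic : ℝ → Set ℝ))) :=
    (generateFrom_eq_prod MeasurableSpace.generateFrom_measurableSet hD
      isCountablySpanning_measurableSet hspan).symm
  refine ext_of_generate_finite _ hgen
    (MeasurableSpace.isPiSystem_measurableSet.prod isPiSystem_Iic) ?_ (by simp)
  rintro S ⟨s, hs, t, ⟨y, rfl⟩, rfl⟩
  have hs : MeasurableSet s := hs
  -- compute the left-hand side
  have hpre₁ : (fun ω => (ζ' ω, sInf {y' : ℝ | u ω ≤ F (ζ' ω) y'})) ⁻¹' (s ×ˢ Set.Iic y)
      = {ω | ζ' ω ∈ s ∧ u ω ≤ F (ζ' ω) y} := by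
    ext ω
    simp only [Set.mem_preimage, Set.mem_prod, Set.mem_Iic, Set.mem_setOf_eq]
    exact and_congr_right fun _ => key (u ω) (hu_mem ω) (ζ' ω) y
  rw [Measure.map_apply (hζ'_meas.prodMk hη'_meas) (hs.prod measurableSet_Iic), hpre₁]
  -- use independence of u and ζ'
  have hjoint : P.map (fun ω => (ζ' ω, u ω)) = (P.map ζ').prod (P.map u) :=
    (indepFun_iff_map_prod_eq_prod_map_map hζ'_meas.aemeasurable hu_meas.aemeasurable).mp
      hu_indep.symm
  set E : Set ((Fin m → ℝ) × ℝ) := {p | p.1 ∈ s ∧ p.2 ≤ F p.1 y} with hE_def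
  have hE : MeasurableSet E :=
    (measurable_fst hs).inter
      (measurableSet_le measurable_snd (hF_meas.comp (measurable_fst.prodMk measurable_const)))
  have hPE : P {ω | ζ' ω ∈ s ∧ u ω ≤ F (ζ' ω) y}
      = ((P.map ζ').prod (P.map u)) E := by
    rw [← hjoint, Measure.map_apply (hζ'_meas.prodMk hu_meas) hE]
    rfl
  rw [hPE, Measure.prod_apply hE]
  -- compute the slices
  have hslice : ∀ x, (P.map u) (Prod.mk x ⁻¹' E)
      = s.indicator (fun x => ENNReal.ofReal (F x y)) x := by
    intro x
    by_cases hx : x ∈ s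
    · have hpre : Prod.mk x ⁻¹' E = Set.Iic (F x y) := by
        ext v
        simp [hE_def, hx]
      rw [hpre, Set.indicator_of_mem hx, hu_law,
        Measure.restrict_apply measurableSet_Iic]
      obtain ⟨h0, h1⟩ := hF_range x y
      have hsub1 : Set.Iic (F x y) ∩ Set.Ioo 0 1 ⊆ Set.Ioc 0 (F x y) :=
        fun v hv => ⟨hv.2.1, hv.1⟩
      have hsub2 : Set.Ioo 0 (F x y) ⊆ Set.Iic (F x y) ∩ Set.Ioo 0 1 :=
        fun v hv => ⟨hv.2.le, hv.1, lt_of_lt_of_le hv.2 h1⟩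
      refine le_antisymm ?_ ?_
      · calc volume (Set.Iic (F x y) ∩ Set.Ioo 0 1) ≤ volume (Set.Ioc 0 (F x y)) :=
              measure_mono hsub1
          _ = ENNReal.ofReal (F x y) := by rw [Real.volume_Ioc, sub_zero]
      · calc ENNReal.ofReal (F x y) = volume (Set.Ioo 0 (F x y)) := by
              rw [Real.volume_Ioo, sub_zero]
          _ ≤ volume (Set.Iic (F x y) ∩ Set.Ioo 0 1) := measure_mono hsub2
    · have hpre : Prod.mk x ⁻¹' E = ∅ := by
        ext v
        simp [hE_def, hx]
      rw [hpre, Set.indicator_of_notMem hx]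
      simp
  rw [lintegral_congr hslice,
    lintegral_indicator hs (fun x => ENNReal.ofReal (F x y)), ← hlaw]
  -- identify the integral with the conditional probability
  haveI : IsProbabilityMeasure (P.map ζ) := Measure.isProbabilityMeasure_map hζ_meas.aemeasurable
  have hFy_meas : Measurable fun x => F x y :=
    hF_meas.comp (measurable_id.prodMk measurable_const)
  have hint : Integrable (fun x => F x y) (P.map ζ) := by
    refine Integrable.mono' (integrable_const 1) hFy_meas.aestronglyMeasurable
      (Filter.Eventually.of_forall fun x => ?_)
    rw [Real.norm_eq_abs, abs_le]
    obtain ⟨h0, h1⟩ := hF_range x y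
    exact ⟨by linarith, h1⟩
  have hlint : ∫⁻ x in s, ENNReal.ofReal (F x y) ∂(P.map ζ)
      = ENNReal.ofReal (∫ x in s, F x y ∂(P.map ζ)) :=
    (ofReal_integral_eq_lintegral_ofReal hint.restrict
      (Filter.Eventually.of_forall fun x => (hF_range x y).1)).symm
  rw [hlint, hF_cond y s hs, ENNReal.ofReal_toReal (measure_ne_top P _)]
  -- compute the right-hand side
  rw [Measure.map_apply (hζ_meas.prodMk hη_meas) (hs.prod measurableSet_Iic)]
  congr 1
  ext ω
  simp only [Set.mem_setOf_eq, Set.mem_preimage, Set.mem_prod, Set.mem_Iic]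
  exact and_comm
end

section
/- Let K be a compact topological space, let u, v : K → ℝ be continuous, and let d : K × K → ℝ be continuous with d ≥ 0 and d(x, y) = 0 if and only if x = y. Set ℓ := max_{x ∈ K} (u(x) − v(x)), M := max_K u, m := min_K v. For each ε > 0, let (x_ε, y_ε) ∈ K × K be a maximizer of Φ_ε(x, y) := u(x) − v(y) − d(x, y)/ε over K × K (such a maximizer exists). Then: (i) d(x_ε, y_ε)/ε ≤ M − m − ℓ for every ε > 0; (ii) d(x_ε, y_ε) → 0 as ε → 0; (iii) for every sequence ε_i ↓ 0 such that (x_{ε_i}, y_{ε_i}) converges to some (x̄, ȳ) ∈ K × K, one has x̄ = ȳ, u(x̄) − v(x̄) = ℓ, and d(x_{ε_i}, y_{ε_i})/ε_i → 0 as i → ∞. -/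
/-- doubling of variables on a compact space. Let `K` be compact, `u, v`
continuous, `d` a continuous nonnegative function vanishing exactly on the diagonal,
`ℓ = max (u − v)`, `M = max u`, `m = min v`, and for each `ε > 0` let `(x_ε, y_ε)` maximize
`Φ_ε(x,y) = u(x) − v(y) − d(x,y)/ε`. Then
(i) `d(x_ε, y_ε)/ε ≤ M − m − ℓ`;
(ii) `d(x_ε, y_ε) → 0` as `ε ↓ 0`;
(iii) along any sequence `ε_i ↓ 0` with `(x_{ε_i}, y_{ε_i}) → (xb, yb)` one has `xb = yb`,
`u(xb) − v(xb) = ℓ`, and `d(x_{ε_i}, y_{ε_i})/ε_i → 0`. -/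
theorem stmt7 {K : Type*} [TopologicalSpace K] [CompactSpace K] [Nonempty K]
    (u v : K → ℝ) (hu : Continuous u) (hv : Continuous v)
    (d : K → K → ℝ) (hd : Continuous fun p : K × K => d p.1 p.2)
    (hd_nonneg : ∀ x y, 0 ≤ d x y) (hd_eq : ∀ x y, d x y = 0 ↔ x = y)
    (ℓ M m : ℝ)
    (hℓ : IsGreatest (Set.range fun x => u x - v x) ℓ)
    (hM : IsGreatest (Set.range u) M)
    (hm : IsLeast (Set.range v) m)
    (x y : ℝ → K)
    (hmax : ∀ ε : ℝ, 0 < ε → ∀ p q : K,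
      u p - v q - d p q / ε ≤ u (x ε) - v (y ε) - d (x ε) (y ε) / ε) :
    (∀ ε : ℝ, 0 < ε → d (x ε) (y ε) / ε ≤ M - m - ℓ) ∧
    Filter.Tendsto (fun ε => d (x ε) (y ε)) (nhdsWithin 0 (Set.Ioi 0)) (nhds 0) ∧
    (∀ (εs : ℕ → ℝ), Antitone εs → (∀ i, 0 < εs i) →
      Filter.Tendsto εs Filter.atTop (nhds 0) →
      ∀ xb yb : K,
        Filter.Tendsto (fun i => (x (εs i), y (εs i))) Filter.atTop (nhds (xb, yb)) →
        xb = yb ∧ u xb - v xb = ℓ ∧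
          Filter.Tendsto (fun i => d (x (εs i)) (y (εs i)) / εs i) Filter.atTop (nhds 0)) := by
  obtain ⟨x0, hx0⟩ := hℓ.1
  have key : ∀ ε : ℝ, 0 < ε → ℓ + d (x ε) (y ε) / ε ≤ u (x ε) - v (y ε) := by
    intro ε hε
    have h := hmax ε hε x0 x0
    rw [(hd_eq x0 x0).mpr rfl] at h
    simp only [zero_div] at h
    have hx0' : u x0 - v x0 = ℓ := hx0
    linarith
  have part1 : ∀ ε : ℝ, 0 < ε → d (x ε) (y ε) / ε ≤ M - m - ℓ := by
    intro ε hε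
    have h1 := key ε hε
    have h2 : u (x ε) ≤ M := hM.2 ⟨x ε, rfl⟩
    have h3 : m ≤ v (y ε) := hm.2 ⟨y ε, rfl⟩
    linarith
  have part2 : Filter.Tendsto (fun ε => d (x ε) (y ε)) (nhdsWithin 0 (Set.Ioi 0)) (nhds 0) := by
    have hupper : Filter.Tendsto (fun ε : ℝ => ε * (M - m - ℓ)) (nhdsWithin 0 (Set.Ioi 0))
        (nhds 0) := by
      have : Filter.Tendsto (fun ε : ℝ => ε * (M - m - ℓ)) (nhds 0) (nhds (0 * (M - m - ℓ))) :=
        (continuous_id.mul continuous_const).tendsto 0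
      rw [zero_mul] at this
      exact this.mono_left nhdsWithin_le_nhds
    refine tendsto_of_tendsto_of_tendsto_of_le_of_le' tendsto_const_nhds hupper ?_ ?_
    · exact Filter.Eventually.of_forall fun ε => hd_nonneg _ _
    · filter_upwards [self_mem_nhdsWithin] with ε (hε : 0 < ε)
      have := part1 ε hε
      calc d (x ε) (y ε) = (d (x ε) (y ε) / ε) * ε := by field_simp
        _ ≤ (M - m - ℓ) * ε := by
            exact mul_le_mul_of_nonneg_right this hε.le
        _ = ε * (M - m - ℓ) := mul_comm _ _
  refine ⟨part1, part2, ?_⟩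
  intro εs hanti hpos hεs0 xb yb hconv
  have hεsW : Filter.Tendsto εs Filter.atTop (nhdsWithin 0 (Set.Ioi 0)) :=
    tendsto_nhdsWithin_of_tendsto_nhds_of_eventually_within _ hεs0
      (Filter.Eventually.of_forall hpos)
  have hd0 : Filter.Tendsto (fun i => d (x (εs i)) (y (εs i))) Filter.atTop (nhds 0) :=
    part2.comp hεsW
  have hdlim : Filter.Tendsto (fun i => d (x (εs i)) (y (εs i))) Filter.atTop
      (nhds (d xb yb)) := (hd.tendsto (xb, yb)).comp hconv
  have hdxy : d xb yb = 0 := tendsto_nhds_unique hdlim hd0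
  have hxy : xb = yb := (hd_eq xb yb).mp hdxy
  have huv : Filter.Tendsto (fun i => u (x (εs i)) - v (y (εs i))) Filter.atTop
      (nhds (u xb - v yb)) := by
    have hux : Filter.Tendsto (fun i => u (x (εs i))) Filter.atTop (nhds (u xb)) :=
      (hu.tendsto xb).comp ((continuous_fst.tendsto _).comp hconv)
    have hvy : Filter.Tendsto (fun i => v (y (εs i))) Filter.atTop (nhds (v yb)) :=
      (hv.tendsto yb).comp ((continuous_snd.tendsto _).comp hconv)
    exact hux.sub hvy
  have hge : ℓ ≤ u xb - v yb := by
    refine le_of_tendsto_of_tendsto' tendsto_const_nhds huv fun i => ?_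
    have h1 := key (εs i) (hpos i)
    have h2 : 0 ≤ d (x (εs i)) (y (εs i)) / εs i :=
      div_nonneg (hd_nonneg _ _) (hpos i).le
    linarith
  have hle : u xb - v xb ≤ ℓ := hℓ.2 ⟨xb, rfl⟩
  have heq : u xb - v xb = ℓ := le_antisymm hle (hxy ▸ hge)
  refine ⟨hxy, heq, ?_⟩
  have hupper : Filter.Tendsto (fun i => u (x (εs i)) - v (y (εs i)) - ℓ) Filter.atTop
      (nhds 0) := by
    have h0 : u xb - v yb - ℓ = 0 := by subst hxy; linarith
    have := huv.sub (tendsto_const_nhds (x := ℓ))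
    rwa [h0] at this
  refine tendsto_of_tendsto_of_tendsto_of_le_of_le' tendsto_const_nhds hupper ?_ ?_
  · exact Filter.Eventually.of_forall fun i => div_nonneg (hd_nonneg _ _) (hpos i).le
  · refine Filter.Eventually.of_forall fun i => ?_
    have := key (εs i) (hpos i)
    linarith
end
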